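/- Let P be a very ample lattice polytope with n vertices which is not normal, and let ν_P be the smallest positive integer such that (k+1)P∩M = V + kP∩M for all k ≥ ν_P, where V is the vertex set. Then k_P ≤ (m_P − d_P − 1)·n + ν_P + 1. -/

import Mathlib

/-!
Write `k = ν_P + c` with `c > (m_P - d_P - 1) n`. Peeling off vertices down to `ν_P` and then
lattice points of `P` down to `d_P`, a lattice point `x` of `kP` is a sum of `c` vertices,
`ν_P - d_P` lattice points of `P` and a lattice point `z` of `d_P P`. By pigeonhole some vertex
`v` occurs at least `m_P - d_P` times among the `c` vertices. Very ampleness writes `z - d_P v`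
as a sum of `σ ≤ m_P` elements of `(P ∩ M) - v`, so `z + (σ - d_P) v` is a sum of
`max σ d_P` lattice points of `P`; absorbing `σ - d_P` of the copies of `v` into `z` writes `x`
as a sum of `k` lattice points of `P`.
-/

open Finset Pointwise

noncomputable section

/-- Lattice points: `ZL N = ℤ^N`. -/
abbrev ZL (N : ℕ) := Fin N → ℤ

/-- Embedding of the lattice into `ℝ^N`. -/
def toR {N : ℕ} (x : ZL N) : Fin N → ℝ := fun i => (x i : ℝ)

/-- The lattice polytope spanned by a finite set `V` of lattice points. -/
def poly {N : ℕ} (V : Finset (ZL N)) : Set (Fin N → ℝ) :=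
  convexHull ℝ (toR '' (V : Set (ZL N)))

/-- The lattice points of the dilate `k • P`. -/
def latPts {N : ℕ} (V : Finset (ZL N)) (k : ℕ) : Set (ZL N) :=
  {x | toR x ∈ (k : ℝ) • poly V}

/-- `P` is `k`-normal: every lattice point of `kP` is a sum of `k` lattice points of `P`. -/
def kNormal {N : ℕ} (V : Finset (ZL N)) (k : ℕ) : Prop :=
  ∀ x ∈ latPts V k, ∃ f : Fin k → ZL N, (∀ i, f i ∈ latPts V 1) ∧ ∑ i, f i = x

/-- `P` is normal. -/
def NormalPoly {N : ℕ} (V : Finset (ZL N)) : Prop := ∀ k, 1 ≤ k → kNormal V k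

/-- The set of which `d_P` is the least element. -/
def dSet {N : ℕ} (V : Finset (ZL N)) : Set ℕ :=
  {n | 0 < n ∧ ∀ k ≥ n, latPts V (k + 1) = latPts V 1 + latPts V k}

/-- The set of which the `k`-normality threshold `k_P` is the least element. -/
def kSet {N : ℕ} (V : Finset (ZL N)) : Set ℕ :=
  {K | 0 < K ∧ ∀ k ≥ K, kNormal V k}

/-- The set of which `ν_P` is the least element. -/
def nuSet {N : ℕ} (V : Finset (ZL N)) : Set ℕ :=
  {n | 0 < n ∧ ∀ k ≥ n, latPts V (k + 1) = (V : Set (ZL N)) + latPts V k}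

/-- `v` is a vertex of `P`. -/
def IsVertex {N : ℕ} (V : Finset (ZL N)) (v : ZL N) : Prop :=
  v ∈ V ∧ toR v ∈ Set.extremePoints ℝ (poly V)

/-- `P` is very ample: for every vertex `v`, every lattice point of the cone
`ℝ_{≥0}(P - v)` is a finite sum of elements `w - v` with `w ∈ P ∩ M`. -/
def VeryAmple {N : ℕ} (V : Finset (ZL N)) : Prop :=
  ∀ v, IsVertex V v → ∀ u : ZL N,
    (∃ c : ℝ, 0 ≤ c ∧ ∃ p ∈ poly V, toR u = c • (p - toR v)) →
    ∃ (m : ℕ) (w : Fin m → ZL N), (∀ i, w i ∈ latPts V 1) ∧ u = ∑ i, (w i - v)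

/-- The set of numbers `m` such that `x - d_P v` is a sum of `m` elements of `(P ∩ M) - v`;
`σ(x, d_P v)` is its least element. -/
def sigmaSet {N : ℕ} (V : Finset (ZL N)) (dP : ℕ) (x v : ZL N) : Set ℕ :=
  {m | ∃ w : Fin m → ZL N, (∀ i, w i ∈ latPts V 1) ∧ x - dP • v = ∑ i, (w i - v)}

/-- The set of all values `σ(x, d_P v)`; `m_P` is its greatest element. -/
def mSet {N : ℕ} (V : Finset (ZL N)) (dP : ℕ) : Set ℕ :=
  {s | ∃ x ∈ latPts V dP, ∃ v, IsVertex V v ∧ IsLeast (sigmaSet V dP x v) s}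

end

lemma exists_eq_nsmul_add_of_mem_nsmul {α : Type*} [AddCommMonoid α] [DecidableEq α]
    {s : Finset α} {x : α} {c t : ℕ} (hx : x ∈ c • (s : Set α)) (hc : t * s.card < c) :
    ∃ v ∈ s, ∀ j ≤ t + 1, ∃ y ∈ (c - j) • (s : Set α), x = j • v + y := by
  obtain ⟨f, hfs, rfl⟩ := Set.mem_nsmul_iff_sum.mp hx
  obtain ⟨v, hv, hfiber⟩ := Finset.exists_lt_card_fiber_of_mul_lt_card_of_maps_to
    (s := Finset.univ) (fun i _ => hfs i) (by simpa [mul_comm] using hc)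
  refine ⟨v, hv, fun j hj => ?_⟩
  obtain ⟨F, hF, hFcard⟩ := Finset.exists_subset_card_eq (hj.trans hfiber)
  refine ⟨∑ i ∈ Fᶜ, f i, ?_, ?_⟩
  · have hsum : ∑ i ∈ Fᶜ, f i ∈ ∑ _i ∈ Fᶜ, (s : Set α) :=
      (Set.mem_finsetSum _ _ _).2 ⟨f, fun _ => hfs _, rfl⟩
    rwa [Finset.sum_const, Finset.card_compl, Fintype.card_fin, hFcard] at hsum
  · have hFv : ∑ i ∈ F, f i = j • v := by
      rw [← hFcard, ← Finset.sum_const]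
      exact Finset.sum_congr rfl fun i hi => (Finset.mem_filter.mp (hF hi)).2
    rw [← hFv, Finset.sum_add_sum_compl]

lemma add_tsub_nsmul_eq {α : Type*} [AddCommGroup α] {a b v : α} {m n : ℕ}
    (h : a + m • v = b + n • v) : a + (m - n) • v = b + (n - m) • v := by
  rcases le_total m n with hmn | hnm
  · obtain ⟨k, rfl⟩ := Nat.exists_eq_add_of_le hmn
    rw [add_comm m k, add_nsmul, ← add_assoc] at h
    simpa using add_right_cancel h
  · obtain ⟨k, rfl⟩ := Nat.exists_eq_add_of_le hnm
    rw [add_comm n k, add_nsmul, ← add_assoc] at h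
    simpa using add_right_cancel h

section

variable {N : ℕ} {V : Finset (ZL N)}

lemma toR_add (a b : ZL N) : toR (a + b) = toR a + toR b := by
  funext i; simp [toR]

lemma toR_sub (a b : ZL N) : toR (a - b) = toR a - toR b := by
  funext i; simp [toR]

lemma toR_nsmul (n : ℕ) (v : ZL N) : toR (n • v) = (n : ℝ) • toR v := by
  funext i; simp [toR]

lemma coe_subset_latPts_one : (V : Set (ZL N)) ⊆ latPts V 1 := by
  intro v hv
  simpa [latPts, poly] using subset_convexHull ℝ (toR '' (V : Set (ZL N))) ⟨v, hv, rfl⟩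

lemma latPts_add_subset (j k : ℕ) : latPts V j + latPts V k ⊆ latPts V (j + k) := by
  rintro _ ⟨a, ha, b, hb, rfl⟩
  change toR (a + b) ∈ ((j + k : ℕ) : ℝ) • convexHull ℝ (toR '' (V : Set (ZL N)))
  rw [toR_add, Nat.cast_add, (convex_convexHull ℝ _).add_smul (by positivity) (by positivity)]
  exact Set.add_mem_add ha hb

lemma kNormal_iff_subset_nsmul {k : ℕ} : kNormal V k ↔ latPts V k ⊆ k • latPts V 1 := by
  simp only [kNormal, Set.subset_def, Set.mem_nsmul_iff_sum]

lemma nuSet_subset_dSet : nuSet V ⊆ dSet V := by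
  rintro n ⟨hn, hnu⟩
  refine ⟨hn, fun k hk => ?_⟩
  rw [hnu k hk]
  refine (Set.add_subset_add_right coe_subset_latPts_one).antisymm ?_
  calc latPts V 1 + latPts V k ⊆ latPts V (1 + k) := latPts_add_subset 1 k
    _ = (V : Set (ZL N)) + latPts V k := by rw [add_comm, hnu k hk]

lemma latPts_add_subset_nsmul_add {W : Set (ZL N)} {b : ℕ}
    (h : ∀ k ≥ b, latPts V (k + 1) = W + latPts V k) (c : ℕ) :
    latPts V (b + c) ⊆ c • W + latPts V b := by
  induction c with
  | zero => simp
  | succ c ih =>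
    rw [← add_assoc, h _ (Nat.le_add_right b c), succ_nsmul', add_assoc]
    exact Set.add_subset_add_left ih

lemma exists_add_nsmul_mem_nsmul_latPts {d m : ℕ} {v z : ZL N}
    (hva : VeryAmple V) (hv : IsVertex V v) (hm : m ∈ upperBounds (mSet V d))
    (hz : z ∈ latPts V d) : ∃ j ≤ m - d, z + j • v ∈ (d + j) • latPts V 1 := by
  have hcone : ∃ c : ℝ, 0 ≤ c ∧ ∃ p ∈ poly V, toR (z - d • v) = c • (p - toR v) := by
    obtain ⟨p, hp, hpz⟩ := Set.mem_smul_set.mp hz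
    exact ⟨d, by positivity, p, hp, by rw [toR_sub, toR_nsmul, ← hpz, smul_sub]⟩
  obtain ⟨n, w, hw, hzw⟩ := hva v hv _ hcone
  have hσ : IsLeast (sigmaSet V d z v) (sInf (sigmaSet V d z v)) :=
    ⟨Nat.sInf_mem ⟨n, w, hw, hzw⟩, fun _ h => Nat.sInf_le h⟩
  set σ := sInf (sigmaSet V d z v)
  obtain ⟨w, hw, hzw⟩ := hσ.1
  refine ⟨σ - d, Nat.sub_le_sub_right (hm ⟨z, hz, v, hv, hσ⟩) d, ?_⟩
  rw [Finset.sum_sub_distrib, Finset.sum_const, Finset.card_univ, Fintype.card_fin] at hzw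
  rw [add_tsub_nsmul_eq (sub_eq_sub_iff_add_eq_add.mp hzw), show d + (σ - d) = σ + (d - σ) by omega,
    add_nsmul]
  exact Set.add_mem_add (Set.mem_nsmul_iff_sum.2 ⟨w, hw, rfl⟩)
    (Set.nsmul_mem_nsmul (coe_subset_latPts_one hv.1))

end

theorem stmt10_general {N : ℕ} (V : Finset (ZL N)) (dP kP mP nuP : ℕ)
    (hvert : ∀ v ∈ V, toR v ∈ Set.extremePoints ℝ (poly V))
    (hva : VeryAmple V)
    (hdP : IsLeast (dSet V) dP)
    (hkP : IsLeast (kSet V) kP)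
    (hmP : IsGreatest (mSet V dP) mP)
    (hnu : IsLeast (nuSet V) nuP) :
    kP ≤ (mP - dP - 1) * V.card + nuP + 1 := by
  have hdnu : dP ≤ nuP := hdP.2 (nuSet_subset_dSet hnu.1)
  refine hkP.2 ⟨Nat.succ_pos _, fun k hk => kNormal_iff_subset_nsmul.2 fun x hx => ?_⟩
  obtain ⟨c, rfl⟩ := Nat.exists_eq_add_of_le (show nuP ≤ k by omega)
  obtain ⟨a, ha, y, hy, rfl⟩ := latPts_add_subset_nsmul_add hnu.1.2 c hx
  rw [← Nat.add_sub_cancel' hdnu] at hy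
  obtain ⟨b, hb, z, hz, rfl⟩ := latPts_add_subset_nsmul_add hdP.1.2 (nuP - dP) hy
  obtain ⟨v, hvV, hsplit⟩ := exists_eq_nsmul_add_of_mem_nsmul ha (t := mP - dP - 1) (by omega)
  obtain ⟨j, hj, hzj⟩ := exists_add_nsmul_mem_nsmul_latPts hva ⟨hvV, hvert v hvV⟩ hmP.2 hz
  obtain ⟨a', ha', rfl⟩ := hsplit j (by omega)
  have hle_mul : mP - dP - 1 ≤ (mP - dP - 1) * V.card :=
    Nat.le_mul_of_pos_right _ (Finset.card_pos.2 ⟨v, hvV⟩)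
  beta_reduce
  rw [show j • v + a' + (b + z) = a' + b + (z + j • v) by abel,
    show nuP + c = c - j + (nuP - dP) + (dP + j) by omega, add_nsmul, add_nsmul]
  exact Set.add_mem_add
    (Set.add_mem_add (Set.nsmul_subset_nsmul_left coe_subset_latPts_one ha') hb) hzj

/-- If a very ample lattice polytope `P` with `n` vertices is not normal, then
`k_P ≤ (m_P − d_P − 1)·n + ν_P + 1`. -/
theorem stmt10 {N : ℕ} (V : Finset (ZL N)) (dP kP mP nuP : ℕ)
    (hvert : ∀ v ∈ V, toR v ∈ Set.extremePoints ℝ (poly V))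
    (hva : VeryAmple V)
    (hdP : IsLeast (dSet V) dP)
    (hkP : IsLeast (kSet V) kP)
    (hmP : IsGreatest (mSet V dP) mP)
    (hnu : IsLeast (nuSet V) nuP)
    (hnn : ¬ NormalPoly V) :
    kP ≤ (mP - dP - 1) * V.card + nuP + 1 :=
  stmt10_general V dP kP mP nuP hvert hva hdP hkP hmP hnu
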